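/- Let m ≥ 1 and n ≥ 2 be such that √m·(log n)/√n ≤ 1. Then (n/(n + √(m·n)·log n))^{√(m·n)·(log n)/2} ≤ n^{-(m·log n)/4}. -/

import Mathlib

open Real

/-! Writing `s = √(m n) log n`, the hypothesis says exactly `s ≤ n`. Then
`log (n / (n + s)) ≤ n / (n + s) - 1 = -s / (n + s) ≤ -s / (2 n)`, so the left-hand side is at most
`exp (-s² / (4 n)) = exp (-(m log² n) / 4) = n ^ (-(m log n) / 4)`. -/

lemma log_div_add_le {n s : ℝ} (hn : 0 < n) (hs : 0 ≤ s) (hsn : s ≤ n) :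
    log (n / (n + s)) ≤ -(s / (2 * n)) :=
  calc log (n / (n + s)) ≤ n / (n + s) - 1 := log_le_sub_one_of_pos (by positivity)
    _ = -(s / (n + s)) := by field_simp; ring
    _ ≤ -(s / (2 * n)) := neg_le_neg (div_le_div_of_nonneg_left hs (by positivity) (by linarith))

lemma div_add_rpow_half_le_exp {n s : ℝ} (hn : 0 < n) (hs : 0 ≤ s) (hsn : s ≤ n) :
    (n / (n + s)) ^ (s / 2) ≤ exp (-(s ^ 2 / (4 * n))) := by
  rw [rpow_def_of_pos (by positivity), exp_le_exp]
  calc log (n / (n + s)) * (s / 2) ≤ -(s / (2 * n)) * (s / 2) :=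
        mul_le_mul_of_nonneg_right (log_div_add_le hn hs hsn) (by positivity)
    _ = -(s ^ 2 / (4 * n)) := by ring

theorem stmt_7 (m n : ℝ) (hm : 1 ≤ m) (hn : 2 ≤ n)
    (h : Real.sqrt m * Real.log n / Real.sqrt n ≤ 1) :
    (n / (n + Real.sqrt (m * n) * Real.log n)) ^ (Real.sqrt (m * n) * Real.log n / 2)
      ≤ n ^ (-(m * Real.log n) / 4) := by
  have hn0 : 0 < n := by linarith
  have hlog : 0 < log n := log_pos (by linarith)
  have hmn : 0 ≤ m * n := by positivity
  have hs_le : √(m * n) * log n ≤ n := by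
    have hsqrt_n : 0 < √n := sqrt_pos.mpr hn0
    rw [div_le_one hsqrt_n] at h
    calc √(m * n) * log n = √m * log n * √n := by rw [sqrt_mul (by linarith)]; ring
      _ ≤ √n * √n := mul_le_mul_of_nonneg_right h hsqrt_n.le
      _ = n := mul_self_sqrt hn0.le
  calc _ ≤ exp (-((√(m * n) * log n) ^ 2 / (4 * n))) :=
        div_add_rpow_half_le_exp hn0 (by positivity) hs_le
    _ = n ^ (-(m * log n) / 4) := by
        rw [rpow_def_of_pos hn0, mul_pow, sq_sqrt hmn]
        field_simp
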